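/- arXiv:1507.01240 — 5 statements merged into one kernel-verified Lean document; each statement's English description precedes it below -/
import Mathlib

section
/- Let r ≥ 1 and let (h_{ij})_{1≤i,j≤r} be a matrix of nonnegative integers. Set n = Σ_{i,j} h_{ij}, let m_j = Σ_{i=1}^r h_{ij} be the j-th column sum and m'_i = Σ_{j=1}^r h_{ij} the i-th row sum. Let Λ = (λ^{(1)},…,λ^{(r)}) be an r-partition with |λ^{(j)}| = m_j for all j, and M = (μ^{(1)},…,μ^{(r)}) an r-partition with |μ^{(i)}| = m'_i for all i. Define A = Σ_{1≤i,j≤r} [j−i−1]·h_{ij}, where [s] denotes the unique integer in {0,…,r−1} congruent to s modulo r, and define B = C(n,2) − n(Λ) − n(M) + Σ_{i=1}^{r−1} Σ_{k=1}^{i} h_{ik}. Then N* − a(Λ) − a(τ(M)) + A = r·B. -/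
/-!
Written in the entries `h i j`, the sizes `|λ^{(j)}| = Σ_i h i j` and `|μ^{(i)}| = Σ_j h i j` turn
`a(Λ)`, `a(τ(M))` and `A` into `r·n(Λ)`, `r·n(M)` plus double sums, and `τ` does not change
`n(M)`. Everything then reduces to one identity per entry: the coefficient
`(r − 1) − (j − 1) − (τ(i) − 1) + [j − i − 1]` of `h i j` equals `r` when `j ≤ i < r` and `0`
otherwise, because `[j − i − 1]` adds `r` exactly when `j ≤ i` and `τ(i) = r − i` except at `i = r`.
-/

open Finset

lemma Int.emod_eq_ite_of_neg_le_of_lt {x r : ℤ} (hrx : -r ≤ x) (hxr : x < r) :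
    x % r = if x < 0 then x + r else x := by
  split_ifs with hx
  · rw [← Int.add_emod_right, Int.emod_eq_of_lt (by omega) (by omega)]
  · exact Int.emod_eq_of_lt (by omega) hxr

/-- The index permutation underlying the involution `τ`: `τ(Λ)^{(i)} = λ^{(tauIndex r i)}`. -/
def tauIndex (r i : ℕ) : ℕ := if i = r then r else r - i

section tauIndex

variable {r i : ℕ}

lemma tauIndex_mem_Icc (hi : i ∈ Icc 1 r) : tauIndex r i ∈ Icc 1 r := by
  simp only [mem_Icc] at *; unfold tauIndex; split_ifs <;> omega

lemma tauIndex_tauIndex (hi : i ∈ Icc 1 r) : tauIndex r (tauIndex r i) = i := by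
  simp only [mem_Icc] at hi; unfold tauIndex; split_ifs <;> omega

lemma sum_Icc_comp_tauIndex {β : Type*} [AddCommMonoid β] (g : ℕ → β) :
    ∑ i ∈ Icc 1 r, g (tauIndex r i) = ∑ i ∈ Icc 1 r, g i :=
  sum_nbij' (tauIndex r) (tauIndex r) (fun _ => tauIndex_mem_Icc) (fun _ => tauIndex_mem_Icc)
    (fun _ => tauIndex_tauIndex) (fun _ => tauIndex_tauIndex) fun _ _ => rfl

end tauIndex

lemma sum_Icc_sum_Icc_lower {β : Type*} [AddCommMonoid β] (r : ℕ) (f : ℕ → ℕ → β) :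
    ∑ i ∈ Icc 1 (r - 1), ∑ k ∈ Icc 1 i, f i k
      = ∑ i ∈ Icc 1 r, ∑ j ∈ Icc 1 r, if i < r ∧ j ≤ i then f i j else 0 := by
  simp only [ite_and, sum_ite_irrel, sum_const_zero, ← sum_filter]
  have hrows : {i ∈ Icc 1 r | i < r} = Icc 1 (r - 1) := by
    ext i; simp only [mem_filter, mem_Icc]; omega
  refine hrows ▸ sum_congr rfl fun i hi => ?_
  congr 1
  ext j; simp only [mem_filter, mem_Icc] at hi ⊢; omega

lemma entry_weight_eq {r i j : ℕ} (hi : i ∈ Icc 1 r) (hj : j ∈ Icc 1 r) :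
    ((r : ℤ) - 1) - ((j : ℤ) - 1) - ((tauIndex r i : ℤ) - 1) + ((j : ℤ) - i - 1) % r
      = if i < r ∧ j ≤ i then (r : ℤ) else 0 := by
  simp only [mem_Icc] at hi hj
  rw [Int.emod_eq_ite_of_neg_le_of_lt (by omega) (by omega), tauIndex]
  split_ifs <;> push_cast [*] <;> omega

lemma sum_weighted_entries (r : ℕ) (h : ℕ → ℕ → ℤ) :
    ((r : ℤ) - 1) * ∑ i ∈ Icc 1 r, ∑ j ∈ Icc 1 r, h i j
      - ∑ i ∈ Icc 1 r, ∑ j ∈ Icc 1 r, ((j : ℤ) - 1) * h i j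
      - ∑ i ∈ Icc 1 r, ∑ j ∈ Icc 1 r, ((tauIndex r i : ℤ) - 1) * h i j
      + ∑ i ∈ Icc 1 r, ∑ j ∈ Icc 1 r, (((j : ℤ) - i - 1) % r) * h i j
      = r * ∑ i ∈ Icc 1 (r - 1), ∑ k ∈ Icc 1 i, h i k := by
  rw [sum_Icc_sum_Icc_lower]
  simp only [mul_sum, ← sum_sub_distrib, ← sum_add_distrib]
  refine sum_congr rfl fun i hi => sum_congr rfl fun j hj => ?_
  rw [mul_ite, mul_zero, ← ite_zero_mul, ← entry_weight_eq hi hj]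
  ring

theorem stmt_0_general (r : ℕ) (h : ℕ → ℕ → ℕ)
    (Λ M : ℕ → (ℕ →₀ ℕ))
    (hΛsize : ∀ j ∈ Icc 1 r, ((Λ j).sum fun _ v => v) = ∑ i ∈ Icc 1 r, h i j)
    (hMsize : ∀ i ∈ Icc 1 r, ((M i).sum fun _ v => v) = ∑ j ∈ Icc 1 r, h i j)
    (n : ℕ) (hn : n = ∑ i ∈ Icc 1 r, ∑ j ∈ Icc 1 r, h i j)
    (np : (ℕ →₀ ℕ) → ℤ)
    (size : (ℕ →₀ ℕ) → ℤ) (hsize : ∀ p, size p = p.sum fun _ v => (v : ℤ))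
    (a : (ℕ → (ℕ →₀ ℕ)) → ℤ)
    (ha : ∀ L, a L = (r : ℤ) * (∑ i ∈ Icc 1 r, np (L i))
        + ∑ i ∈ Icc 1 r, ((i : ℤ) - 1) * size (L i))
    (τM : ℕ → (ℕ →₀ ℕ)) (hτM : ∀ i, τM i = if i = r then M r else M (r - i))
    (A : ℤ) (hA : A = ∑ i ∈ Icc 1 r, ∑ j ∈ Icc 1 r,
        (((j : ℤ) - (i : ℤ) - 1) % (r : ℤ)) * (h i j : ℤ))
    (B : ℤ) (hB : B = (n.choose 2 : ℤ) - (∑ i ∈ Icc 1 r, np (Λ i))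
        - (∑ i ∈ Icc 1 r, np (M i))
        + ∑ i ∈ Icc 1 (r - 1), ∑ k ∈ Icc 1 i, (h i k : ℤ))
    (Nstar : ℤ) (hN : Nstar = (n.choose 2 : ℤ) * (r : ℤ) + ((r : ℤ) - 1) * (n : ℤ)) :
    Nstar - a Λ - a τM + A = (r : ℤ) * B := by
  have hsize_cast (p : ℕ →₀ ℕ) : size p = ((p.sum fun _ v => v : ℕ) : ℤ) := by
    rw [hsize, Nat.cast_finsupp_sum]
  have haΛ : a Λ = r * ∑ i ∈ Icc 1 r, np (Λ i)
      + ∑ i ∈ Icc 1 r, ∑ j ∈ Icc 1 r, ((j : ℤ) - 1) * h i j := by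
    rw [ha, sum_comm]
    congr 1
    refine sum_congr rfl fun j hj => ?_
    rw [hsize_cast, hΛsize j hj, Nat.cast_sum, mul_sum]
  have haτM : a τM = r * ∑ i ∈ Icc 1 r, np (M i)
      + ∑ i ∈ Icc 1 r, ∑ j ∈ Icc 1 r, ((tauIndex r i : ℤ) - 1) * h i j := by
    have hτM_eq : τM = fun i => M (tauIndex r i) :=
      funext fun i => (hτM i).trans (apply_ite M _ _ _).symm
    rw [ha, hτM_eq]
    beta_reduce
    rw [sum_Icc_comp_tauIndex fun k => np (M k),
      ← sum_Icc_comp_tauIndex fun k => ∑ j ∈ Icc 1 r, ((tauIndex r k : ℤ) - 1) * h k j]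
    congr 1
    refine sum_congr rfl fun i hi => ?_
    rw [tauIndex_tauIndex hi, hsize_cast, hMsize _ (tauIndex_mem_Icc hi), Nat.cast_sum, mul_sum]
  have hn_cast : (n : ℤ) = ∑ i ∈ Icc 1 r, ∑ j ∈ Icc 1 r, (h i j : ℤ) := by
    rw [hn]; push_cast; rfl
  rw [hN, haΛ, haτM, hA, hB]
  linear_combination sum_weighted_entries r (fun i j => (h i j : ℤ)) + ((r : ℤ) - 1) * hn_cast

/-- Lemma 5.9 of the paper.  Partitions are encoded as finitely supported functions
`p : ℕ →₀ ℕ` with `p j` the `j`-th part (`j ≥ 1`), `p 0 = 0`, weakly decreasing on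
positive indices.  `np` is the `n`-function `n(λ) = Σ_{j≥1} (j−1) λ_j`, `size` is `|λ|`,
and `a` is the `a`-function `a(Λ) = r·n(Λ) + Σ_{i=1}^r (i−1)|λ^{(i)}|` of an `r`-tuple. -/
theorem stmt_0 (r : ℕ) (hr : 1 ≤ r) (h : ℕ → ℕ → ℕ)
    (Λ M : ℕ → (ℕ →₀ ℕ))
    (hΛpart : ∀ i ∈ Icc 1 r, (Λ i) 0 = 0 ∧ ∀ j k : ℕ, 1 ≤ j → j ≤ k → (Λ i) k ≤ (Λ i) j)
    (hMpart : ∀ i ∈ Icc 1 r, (M i) 0 = 0 ∧ ∀ j k : ℕ, 1 ≤ j → j ≤ k → (M i) k ≤ (M i) j)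
    (hΛsize : ∀ j ∈ Icc 1 r, ((Λ j).sum fun _ v => v) = ∑ i ∈ Icc 1 r, h i j)
    (hMsize : ∀ i ∈ Icc 1 r, ((M i).sum fun _ v => v) = ∑ j ∈ Icc 1 r, h i j)
    (n : ℕ) (hn : n = ∑ i ∈ Icc 1 r, ∑ j ∈ Icc 1 r, h i j)
    (np : (ℕ →₀ ℕ) → ℤ) (hnp : ∀ p, np p = p.sum fun j v => ((j : ℤ) - 1) * (v : ℤ))
    (size : (ℕ →₀ ℕ) → ℤ) (hsize : ∀ p, size p = p.sum fun _ v => (v : ℤ))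
    (a : (ℕ → (ℕ →₀ ℕ)) → ℤ)
    (ha : ∀ L, a L = (r : ℤ) * (∑ i ∈ Icc 1 r, np (L i))
        + ∑ i ∈ Icc 1 r, ((i : ℤ) - 1) * size (L i))
    (τM : ℕ → (ℕ →₀ ℕ)) (hτM : ∀ i, τM i = if i = r then M r else M (r - i))
    (A : ℤ) (hA : A = ∑ i ∈ Icc 1 r, ∑ j ∈ Icc 1 r,
        (((j : ℤ) - (i : ℤ) - 1) % (r : ℤ)) * (h i j : ℤ))
    (B : ℤ) (hB : B = (n.choose 2 : ℤ) - (∑ i ∈ Icc 1 r, np (Λ i))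
        - (∑ i ∈ Icc 1 r, np (M i))
        + ∑ i ∈ Icc 1 (r - 1), ∑ k ∈ Icc 1 i, (h i k : ℤ))
    (Nstar : ℤ) (hN : Nstar = (n.choose 2 : ℤ) * (r : ℤ) + ((r : ℤ) - 1) * (n : ℤ)) :
    Nstar - a Λ - a τM + A = (r : ℤ) * B :=
  stmt_0_general r h Λ M hΛsize hMsize n hn np size hsize a ha τM hτM A hA B hB Nstar hN
end

section
/- Let r ≥ 1 and let (h_{ij})_{1≤i,j≤r} be a matrix of nonnegative integers. Set n = Σ_{i,j} h_{ij}, let m_j = Σ_{i=1}^r h_{ij} be the j-th column sum and m'_i = Σ_{j=1}^r h_{ij} the i-th row sum. Define C = (r−1)·n − (Σ_{j=1}^r (j−1)·m_j) − (Σ_{i=1}^{r−2} (r−1−i)·m'_i + (r−1)·m'_r). Then C + Σ_{1≤i,j≤r} [j−i−1]·h_{ij} = r·Σ_{i=1}^{r−1} Σ_{k=1}^{i} h_{ik}, where [s] denotes the unique integer in {0,…,r−1} congruent to s modulo r. -/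
/-!
For `1 ≤ i, j ≤ r` the residue is `[j - i - 1] = (j - i - 1) + r · [j ≤ i]`. The linear part
`j - i - 1 = (j - 1) + (r - 1 - i) - (r - 1)` cancels exactly against `C`, once the row term
`(r - 1) m'_r` of `C` is read as `(r - 1 - r) m'_r + r m'_r` (the row `i = r - 1` has weight
`0`). What is left is `r` times the lower-triangular sum `∑_{k ≤ i} h_{ik}` over all rows,
minus `r m'_r`, i.e. the lower-triangular sum over the rows `i ≤ r - 1`.
-/

open Finset

lemma sum_Icc_one_eq_sum_Icc_sub_one_add {M : Type*} [AddCommMonoid M] {r : ℕ} (hr : 1 ≤ r)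
    (f : ℕ → M) : ∑ i ∈ Icc 1 r, f i = ∑ i ∈ Icc 1 (r - 1), f i + f r := by
  obtain ⟨s, rfl⟩ := Nat.exists_eq_add_of_le' hr
  exact sum_Icc_succ_top (by omega) f

lemma sum_Icc_sub_two_eq_sum_Icc_sub_one (r : ℕ) (x : ℕ → ℤ) :
    ∑ i ∈ Icc 1 (r - 2), ((r : ℤ) - 1 - i) * x i = ∑ i ∈ Icc 1 (r - 1), ((r : ℤ) - 1 - i) * x i := by
  refine sum_subset (Icc_subset_Icc_right (by omega)) fun i hi hi' => ?_
  simp only [mem_Icc, not_and, not_le] at hi hi'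
  have : (r : ℤ) - 1 - i = 0 := by omega
  rw [this, zero_mul]

lemma sub_sub_one_emod {r i j : ℕ} (hi : i ∈ Icc 1 r) (hj : j ∈ Icc 1 r) :
    ((j : ℤ) - i - 1) % r = (j - i - 1) + if j ≤ i then (r : ℤ) else 0 := by
  simp only [mem_Icc] at hi hj
  split_ifs with hji
  · rw [← Int.add_emod_right, Int.emod_eq_of_lt] <;> omega
  · rw [add_zero, Int.emod_eq_of_lt] <;> omega

lemma sum_sum_sub_sub_one_emod_mul (r : ℕ) (h : ℕ → ℕ → ℤ) :
    ∑ i ∈ Icc 1 r, ∑ j ∈ Icc 1 r, (((j : ℤ) - i - 1) % r) * h i j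
      = ∑ i ∈ Icc 1 r, ∑ j ∈ Icc 1 r, ((j : ℤ) - i - 1) * h i j
        + r * ∑ i ∈ Icc 1 r, ∑ j ∈ Icc 1 i, h i j := by
  rw [mul_sum, ← sum_add_distrib]
  refine sum_congr rfl fun i hi => ?_
  have hfilter : {j ∈ Icc 1 r | j ≤ i} = Icc 1 i := by
    ext j; simp only [mem_filter, mem_Icc] at hi ⊢; omega
  rw [mul_sum, ← hfilter, sum_filter, ← sum_add_distrib]
  refine sum_congr rfl fun j hj => ?_
  rw [sub_sub_one_emod hi hj]
  split_ifs <;> ring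

lemma sum_sum_sub_sub_one_mul (s t : Finset ℕ) (h : ℕ → ℕ → ℤ) (c : ℤ) :
    ∑ i ∈ s, ∑ j ∈ t, ((j : ℤ) - i - 1) * h i j
      = ∑ j ∈ t, ((j : ℤ) - 1) * ∑ i ∈ s, h i j + ∑ i ∈ s, (c - 1 - i) * ∑ j ∈ t, h i j
        - (c - 1) * ∑ i ∈ s, ∑ j ∈ t, h i j := by
  simp only [mul_sum]
  rw [sum_comm (s := t), ← sum_add_distrib, ← sum_sub_distrib]
  refine sum_congr rfl fun i _ => ?_
  rw [← sum_add_distrib, ← sum_sub_distrib]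
  exact sum_congr rfl fun j _ => by ring

/-- The key identity (5.11.3) in the proof of Lemma 5.9 of the paper.  Here
`((j - i - 1) % r)` is the residue `[j−i−1] ∈ {0,…,r−1}` of `j−i−1` modulo `r`. -/
theorem stmt_1 (r : ℕ) (hr : 1 ≤ r) (h : ℕ → ℕ → ℕ)
    (n : ℕ) (hn : n = ∑ i ∈ Icc 1 r, ∑ j ∈ Icc 1 r, h i j)
    (m m' : ℕ → ℕ)
    (hm : ∀ j, m j = ∑ i ∈ Icc 1 r, h i j)
    (hm' : ∀ i, m' i = ∑ j ∈ Icc 1 r, h i j)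
    (C : ℤ)
    (hC : C = ((r : ℤ) - 1) * (n : ℤ) - (∑ j ∈ Icc 1 r, ((j : ℤ) - 1) * (m j : ℤ))
        - ((∑ i ∈ Icc 1 (r - 2), ((r : ℤ) - 1 - (i : ℤ)) * (m' i : ℤ))
            + ((r : ℤ) - 1) * (m' r : ℤ))) :
    C + ∑ i ∈ Icc 1 r, ∑ j ∈ Icc 1 r, (((j : ℤ) - (i : ℤ) - 1) % (r : ℤ)) * (h i j : ℤ)
      = (r : ℤ) * ∑ i ∈ Icc 1 (r - 1), ∑ k ∈ Icc 1 i, (h i k : ℤ) := by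
  subst hn hC
  simp only [hm, hm']
  push_cast
  set H : ℕ → ℕ → ℤ := fun i j => h i j
  rw [sum_sum_sub_sub_one_emod_mul r H, sum_sum_sub_sub_one_mul _ _ H r,
    sum_Icc_sub_two_eq_sum_Icc_sub_one,
    sum_Icc_one_eq_sum_Icc_sub_one_add hr (fun i => ((r : ℤ) - 1 - i) * ∑ j ∈ Icc 1 r, H i j),
    sum_Icc_one_eq_sum_Icc_sub_one_add hr (fun i => ∑ j ∈ Icc 1 i, H i j)]
  ring
end

section
/- Let n, r ≥ 1 and let f, f' : {1,…,n} → {1,…,r} be two functions; set m_j = |f^{−1}(j)| and m'_i = |f'^{−1}(i)|. Let H = {σ ∈ S_n : f∘σ = f} and H' = {σ ∈ S_n : f'∘σ = f'} be the corresponding Young subgroups. For x ∈ S_n define the r×r matrix h(x) by h(x)_{ij} = |x^{−1}(f'^{−1}(i)) ∩ f^{−1}(j)|. Then h(x) = h(y) if and only if H'xH = H'yH, and the induced map is a bijection from the set of double cosets H'\S_n/H onto the set of r×r matrices of nonnegative integers whose j-th column sum is m_j for every j and whose i-th row sum is m'_i for every i. -/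
open Finset

private lemma card_filter_perm' {α : Type*} [Fintype α] [DecidableEq α]
    (b : Equiv.Perm α) (p : α → Prop) [DecidablePred p] :
    (univ.filter fun k => p (b k)).card = (univ.filter p).card :=
  Finset.card_equiv b (fun k => by simp)

private def sigmaFstFiberEquiv {β : Type*} (M : β → ℕ) (b0 : β) :
    {p : Σ b, Fin (M b) // p.1 = b0} ≃ Fin (M b0) where
  toFun p := Fin.cast (congrArg M p.2) p.1.2
  invFun k := ⟨⟨b0, k⟩, rfl⟩
  left_inv := by rintro ⟨⟨b, k⟩, rfl⟩; rfl
  right_inv k := rfl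

private lemma exists_perm_comp {α β : Type*} [Fintype α] [DecidableEq α] [DecidableEq β]
    (u v : α → β)
    (h : ∀ b, (univ.filter fun a => u a = b).card = (univ.filter fun a => v a = b).card) :
    ∃ σ : Equiv.Perm α, ∀ a, u (σ a) = v a := by
  have e : ∀ b, {a // v a = b} ≃ {a // u a = b} := fun b =>
    Fintype.equivOfCardEq (by rw [Fintype.card_subtype, Fintype.card_subtype, h])
  refine ⟨(Equiv.sigmaFiberEquiv v).symm.trans
    ((Equiv.sigmaCongrRight e).trans (Equiv.sigmaFiberEquiv u)), fun a => ?_⟩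
  exact (e (v a) ⟨a, rfl⟩).2

/-- Parametrization of double cosets of Young subgroups of `S_n` by `r×r` matrices of
nonnegative integers with prescribed row and column sums (used in 5.7 of the paper).
The Young subgroups are `H = {σ : f∘σ = f}` and `H' = {σ : f'∘σ = f'}`, and
`hmat x i j = |x⁻¹(f'⁻¹(i)) ∩ f⁻¹(j)|`.  The map `x ↦ hmat x` takes values in the set
of matrices with column sums `m_j = |f⁻¹(j)|` and row sums `m'_i = |f'⁻¹(i)|`,
it is constant exactly on double cosets `H'xH`, and it is surjective onto this set of
matrices; i.e. it induces a bijection  `H'\S_n/H ≃ 𝓜_{𝐦,𝐦'}`. -/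
theorem stmt_5 (n r : ℕ) (hn : 1 ≤ n) (hr : 1 ≤ r)
    (f f' : Fin n → Fin r)
    (hmat : Equiv.Perm (Fin n) → Fin r → Fin r → ℕ)
    (hhmat : ∀ x i j, hmat x i j = (univ.filter fun k => f' (x k) = i ∧ f k = j).card) :
    (∀ x : Equiv.Perm (Fin n),
        (∀ j, ∑ i, hmat x i j = (univ.filter fun k => f k = j).card)
        ∧ (∀ i, ∑ j, hmat x i j = (univ.filter fun k => f' k = i).card))
    ∧ (∀ x y : Equiv.Perm (Fin n), hmat x = hmat y ↔
        ∃ a : Equiv.Perm (Fin n), (∀ k, f' (a k) = f' k) ∧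
          ∃ b : Equiv.Perm (Fin n), (∀ k, f (b k) = f k) ∧ y = a * x * b)
    ∧ (∀ Mt : Fin r → Fin r → ℕ,
        ((∀ j, ∑ i, Mt i j = (univ.filter fun k => f k = j).card)
          ∧ (∀ i, ∑ j, Mt i j = (univ.filter fun k => f' k = i).card))
        → ∃ x : Equiv.Perm (Fin n), hmat x = Mt) := by
  classical
  refine ⟨?_, ?_, ?_⟩
  · -- column and row sums
    intro x
    constructor
    · intro j
      simp only [hhmat]
      rw [Finset.card_eq_sum_card_fiberwise
        (f := fun k => f' (x k)) (t := univ) (fun k _ => mem_univ _)]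
      refine Finset.sum_congr rfl fun i _ => ?_
      congr 1
      ext k
      simp [and_comm]
    · intro i
      simp only [hhmat]
      have h1 : ∑ j, (univ.filter fun k => f' (x k) = i ∧ f k = j).card
          = (univ.filter fun k => f' (x k) = i).card := by
        rw [Finset.card_eq_sum_card_fiberwise
          (f := fun k => f k) (t := univ) (fun k _ => mem_univ _)]
        refine Finset.sum_congr rfl fun j _ => ?_
        congr 1
        ext k
        simp
      rw [h1, card_filter_perm' x (fun k => f' k = i)]
  · -- constant exactly on double cosets
    intro x y
    constructor
    · intro h
      have hfib : ∀ p : Fin r × Fin r,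
          (univ.filter fun k => (f' (x k), f k) = p).card
            = (univ.filter fun k => (f' (y k), f k) = p).card := by
        intro p
        have hxy := congrFun (congrFun h p.1) p.2
        rw [hhmat, hhmat] at hxy
        convert hxy using 2 <;> ext k <;> simp [Prod.ext_iff]
      obtain ⟨b, hb⟩ := exists_perm_comp (fun k => (f' (x k), f k))
        (fun k => (f' (y k), f k)) hfib
      have hb1 : ∀ k, f' (x (b k)) = f' (y k) := fun k => congrArg Prod.fst (hb k)
      have hb2 : ∀ k, f (b k) = f k := fun k => congrArg Prod.snd (hb k)
      refine ⟨y * b⁻¹ * x⁻¹, ?_, b, hb2, ?_⟩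
      · intro m
        have := hb1 (b⁻¹ (x⁻¹ m))
        simpa [Equiv.Perm.mul_apply] using this.symm
      · ext k
        simp [Equiv.Perm.mul_apply]
    · rintro ⟨a, ha, b, hb2, rfl⟩
      funext i j
      rw [hhmat, hhmat]
      have hset : (univ.filter fun k => f' ((a * x * b) k) = i ∧ f k = j)
          = univ.filter (fun k => f' (x (b k)) = i ∧ f (b k) = j) := by
        ext k
        simp only [mem_filter, Equiv.Perm.mul_apply, ha, hb2]
      rw [hset, card_filter_perm' b (fun k => f' (x k) = i ∧ f k = j)]
  · -- surjectivity
    rintro Mt ⟨hcol, hrow⟩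
    set M : Fin r × Fin r → ℕ := fun p => Mt p.1 p.2 with hM
    have hn' : Fintype.card (Σ p : Fin r × Fin r, Fin (M p)) = Fintype.card (Fin n) := by
      rw [Fintype.card_sigma]
      simp only [Fintype.card_fin]
      rw [Fintype.sum_prod_type, Finset.sum_comm]
      calc ∑ j, ∑ i, M (i, j) = ∑ j, (univ.filter fun k => f k = j).card := by
            refine Finset.sum_congr rfl fun j _ => ?_
            exact hcol j
        _ = (univ : Finset (Fin n)).card := by
            rw [← Finset.card_eq_sum_card_fiberwise (f := f) (t := univ)
              (fun k _ => mem_univ _)]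
        _ = n := by simp
    let e : Fin n ≃ Σ p : Fin r × Fin r, Fin (M p) := Fintype.equivOfCardEq hn'.symm
    set t : Fin n → Fin r × Fin r := fun k => (e k).1 with htdef
    have ht : ∀ p, (univ.filter fun k => t k = p).card = M p := by
      intro p
      rw [← Fintype.card_subtype]
      have e1 : {k // t k = p} ≃ Fin (M p) :=
        (e.subtypeEquiv fun k => Iff.rfl).trans (sigmaFstFiberEquiv M p)
      rw [Fintype.card_congr e1, Fintype.card_fin]
    have hsnd : ∀ j, (univ.filter fun k => (t k).2 = j).card
        = (univ.filter fun k => f k = j).card := by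
      intro j
      rw [Finset.card_eq_sum_card_fiberwise
        (f := fun k => (t k).1) (t := univ) (fun k _ => mem_univ _)]
      rw [← hcol j]
      refine Finset.sum_congr rfl fun i _ => ?_
      refine Eq.trans ?_ (ht (i, j))
      congr 1
      ext k
      simp [Prod.ext_iff, and_comm]
    obtain ⟨b, hb⟩ := exists_perm_comp (fun k => (t k).2) f hsnd
    have hfst : ∀ i, (univ.filter fun k => f' k = i).card
        = (univ.filter fun k => (t (b k)).1 = i).card := by
      intro i
      rw [card_filter_perm' b (fun k => (t k).1 = i), ← hrow i]
      have : (univ.filter fun k => (t k).1 = i).card = ∑ j, (univ.filter fun k => t k = (i, j)).card := by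
        rw [Finset.card_eq_sum_card_fiberwise
          (f := fun k => (t k).2) (t := univ) (fun k _ => mem_univ _)]
        refine Finset.sum_congr rfl fun j _ => ?_
        congr 1
        ext k
        simp [Prod.ext_iff]
      rw [this]
      refine (Finset.sum_congr rfl fun j _ => ?_).symm
      exact ht (i, j)
    obtain ⟨c, hc⟩ := exists_perm_comp f' (fun k => (t (b k)).1) hfst
    refine ⟨c, ?_⟩
    funext i j
    rw [hhmat]
    have hset : (univ.filter fun k => f' (c k) = i ∧ f k = j)
        = univ.filter (fun k => t (b k) = (i, j)) := by
      ext k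
      simp [hc, ← hb, Prod.ext_iff]
    rw [hset, card_filter_perm' b (fun k => t k = (i, j))]
    exact ht (i, j)
end

section
/- Fix r ≥ 1 and work with r×r matrices over the ring ℤ[t, t^{−1}] of Laurent polynomials, with indices 1,…,r. Define: P⁻ by P⁻_{ij} = t^{r−i} if j ≤ i and 0 otherwise; P⁺ by P⁺_{11} = t^{r−1}, P⁺_{i1} = t^{i−2} and P⁺_{ii} = t^{r−i} for 2 ≤ i ≤ r, and all other entries 0; the diagonal matrix Λ with Λ_{11} = 1 and Λ_{kk} = t^{2k−2} − t^{2k−2−r} for 2 ≤ k ≤ r; and Ω by Ω_{ij} = t^{(r−1)+((j−i−1) mod r)}, where (s mod r) denotes the residue of s in {0,…,r−1}. Then P⁻ · Λ · (P⁺)^T = Ω. -/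
open LaurentPolynomial

/-- The `n = 1` matrix identity `P⁻ Λ ᵗP⁺ = Ω` of §7.1–7.2 of the paper (Theorem 5.2 for
the cyclic complex reflection group `W_{1,r} = ℤ/rℤ`), over the ring `ℤ[t,t⁻¹]` of
Laurent polynomials.  Indices `i, j` run over `Fin r`, thought of as `1,…,r` (so the
`1`-based index `i` corresponds to `i.val + 1`), and `T` denotes the Laurent monomial
`t^•`. -/
theorem stmt_7 (r : ℕ) (hr : 1 ≤ r)
    (Pm Pp Ω : Matrix (Fin r) (Fin r) (LaurentPolynomial ℤ))
    (Λ : Fin r → LaurentPolynomial ℤ)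
    (hPm : ∀ i j, Pm i j = if j ≤ i then T ((r : ℤ) - 1 - (i.val : ℤ)) else 0)
    (hPp : ∀ i j, Pp i j =
      if j.val = 0 then
        (if i.val = 0 then T ((r : ℤ) - 1) else T ((i.val : ℤ) - 1))
      else if i = j then T ((r : ℤ) - 1 - (i.val : ℤ)) else 0)
    (hΛ : ∀ k : Fin r, Λ k =
      if k.val = 0 then 1 else T (2 * (k.val : ℤ)) - T (2 * (k.val : ℤ) - (r : ℤ)))
    (hΩ : ∀ i j, Ω i j =
      T ((r : ℤ) - 1 + (((j.val : ℤ) - (i.val : ℤ) - 1) % (r : ℤ)))) :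
    Pm * Matrix.diagonal Λ * Pp.transpose = Ω := by
  have h0 : 0 < r := hr
  have hr' : (1 : ℤ) ≤ (r : ℤ) := by exact_mod_cast hr
  set z : Fin r := ⟨0, h0⟩ with hz
  refine Matrix.ext fun i j => ?_
  have hi : (i.val : ℤ) < r := by exact_mod_cast i.isLt
  have hi0 : (0 : ℤ) ≤ (i.val : ℤ) := by positivity
  have hjlt : (j.val : ℤ) < r := by exact_mod_cast j.isLt
  rw [Matrix.mul_assoc, Matrix.mul_apply]
  simp only [Matrix.diagonal_mul, Matrix.transpose_apply]
  have key : ∀ k : Fin r, Pm i k * (Λ k * Pp j k) =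
      (if k = z then
        T ((r:ℤ) - 1 - (i.val:ℤ)) *
          (if j.val = 0 then T ((r:ℤ) - 1) else T ((j.val:ℤ) - 1)) else 0)
    + (if k = j then
        (if j.val = 0 then 0 else
          (if j ≤ i then
            T ((r:ℤ) - 1 - (i.val:ℤ)) *
              ((T (2*(j.val:ℤ)) - T (2*(j.val:ℤ) - (r:ℤ))) * T ((r:ℤ) - 1 - (j.val:ℤ)))
          else 0)) else 0) := by
    intro k
    rw [hPm, hPp, hΛ]
    by_cases hk0 : k = z
    · have hkv : k.val = 0 := by rw [hk0]
      have hle : k ≤ i := by rw [Fin.le_def, hkv]; exact Nat.zero_le _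
      rw [if_pos hk0, if_pos hkv, if_pos hkv, if_pos hle, one_mul]
      by_cases hjz : j = z
      · have hjv : j.val = 0 := by rw [hjz]
        have hkj : k = j := by rw [hk0, hjz]
        simp only [if_pos hjv, if_pos hkj, add_zero]
      · have hjv : j.val ≠ 0 := fun h => hjz (Fin.ext h)
        have hkj : k ≠ j := by rw [hk0]; exact fun h => hjz h.symm
        simp only [if_neg hjv, if_neg hkj, add_zero]
    · have hkv : k.val ≠ 0 := fun h => hk0 (Fin.ext h)
      rw [if_neg hkv, if_neg hkv, if_neg hk0, zero_add]
      by_cases hkj : k = j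
      · subst hkj
        rw [if_pos rfl, if_pos rfl, if_neg hkv]
        by_cases hki : k ≤ i
        · rw [if_pos hki, if_pos hki]
        · rw [if_neg hki, if_neg hki, zero_mul]
      · have hjk : j ≠ k := Ne.symm hkj
        rw [if_neg hjk, if_neg hkj, mul_zero, mul_zero]
  rw [Finset.sum_congr rfl fun k _ => key k, Finset.sum_add_distrib,
    Finset.sum_ite_eq', Finset.sum_ite_eq',
    if_pos (Finset.mem_univ _), if_pos (Finset.mem_univ _), hΩ]
  by_cases hjv : j.val = 0
  · have hj0 : (j.val : ℤ) = 0 := by exact_mod_cast hjv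
    rw [if_pos hjv, if_pos hjv, add_zero]
    have hmod : ((j.val:ℤ) - (i.val:ℤ) - 1) % (r:ℤ) = (r:ℤ) - 1 - (i.val:ℤ) := by
      rw [show (j.val:ℤ) - (i.val:ℤ) - 1 = ((r:ℤ) - 1 - (i.val:ℤ)) + (r:ℤ) * (-1) by
        rw [hj0]; ring, Int.add_mul_emod_self_left,
        Int.emod_eq_of_lt (by omega) (by omega)]
    rw [hmod, ← T_add]
    congr 1; ring
  · have hj1 : (1 : ℤ) ≤ (j.val : ℤ) := by
      exact_mod_cast Nat.one_le_iff_ne_zero.2 hjv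
    rw [if_neg hjv, if_neg hjv]
    by_cases hji : j ≤ i
    · have hjile : (j.val : ℤ) ≤ (i.val : ℤ) := by
        exact_mod_cast (Fin.le_def.mp hji)
      rw [if_pos hji]
      have hmod : ((j.val:ℤ) - (i.val:ℤ) - 1) % (r:ℤ)
          = (j.val:ℤ) - (i.val:ℤ) - 1 + (r:ℤ) := by
        have h1 := Int.add_mul_emod_self_left
          (a := (j.val:ℤ) - (i.val:ℤ) - 1 + (r:ℤ)) (b := (r:ℤ)) (c := -1)
        have h2 : (j.val:ℤ) - (i.val:ℤ) - 1 + (r:ℤ) + (r:ℤ) * (-1)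
            = (j.val:ℤ) - (i.val:ℤ) - 1 := by ring
        rw [h2] at h1
        rw [h1, Int.emod_eq_of_lt (by omega) (by omega)]
      rw [hmod]
      have A1 : T ((r:ℤ) - 1 - (i.val:ℤ)) * T ((j.val:ℤ) - 1)
          = (T ((r:ℤ) - (i.val:ℤ) + (j.val:ℤ) - 2) : LaurentPolynomial ℤ) := by
        rw [← T_add]; congr 1; ring
      have A2 : T (2*(j.val:ℤ)) * T ((r:ℤ) - 1 - (j.val:ℤ))
          = (T ((r:ℤ) + (j.val:ℤ) - 1) : LaurentPolynomial ℤ) := by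
        rw [← T_add]; congr 1; ring
      have A3 : T (2*(j.val:ℤ) - (r:ℤ)) * T ((r:ℤ) - 1 - (j.val:ℤ))
          = (T ((j.val:ℤ) - 1) : LaurentPolynomial ℤ) := by
        rw [← T_add]; congr 1; ring
      have A4 : T ((r:ℤ) - 1 - (i.val:ℤ)) * T ((r:ℤ) + (j.val:ℤ) - 1)
          = (T ((r:ℤ) - 1 + ((j.val:ℤ) - (i.val:ℤ) - 1 + (r:ℤ))) : LaurentPolynomial ℤ) := by
        rw [← T_add]; congr 1; ring
      rw [A1, sub_mul, A2, A3, mul_sub, A1, A4]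
      ring
    · have hij : (i.val : ℤ) < (j.val : ℤ) := by
        have := Fin.lt_def.mp (lt_of_not_ge hji)
        exact_mod_cast this
      rw [if_neg hji, add_zero]
      have hmod : ((j.val:ℤ) - (i.val:ℤ) - 1) % (r:ℤ)
          = (j.val:ℤ) - (i.val:ℤ) - 1 :=
        Int.emod_eq_of_lt (by omega) (by omega)
      rw [hmod, ← T_add]
      congr 1; ring
end

section
/- Fix r ≥ 1 and work with r×r matrices over the polynomial ring ℤ[t], with indices 1,…,r. Define: P' by P'_{ij} = t^{r−i} if j ≤ i and 0 otherwise; the diagonal matrix Λ' with Λ'_{11} = 1 and Λ'_{kk} = t^r − 1 for 2 ≤ k ≤ r; P'' by P''_{11} = t^{r−1}, and P''_{j1} = t^{j−2} and P''_{jj} = t^{j−2} for 2 ≤ j ≤ r, with all other entries 0; and Ω by Ω_{ij} = t^{(r−1)+((j−i−1) mod r)}, where (s mod r) denotes the residue of s in {0,…,r−1}. Then P' · Λ' · (P'')^T = Ω. -/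
open Polynomial

private lemma emod_helper {a r : ℤ} (h0 : 0 ≤ a) (h1 : a < r) : (a - r) % r = a := by
  have e : a - r = a + r * (-1) := by ring
  rw [e, Int.add_mul_emod_self_left, Int.emod_eq_of_lt h0 h1]

/-- The modified form `P' Λ' ᵗP'' = Ω` of the `n = 1` matrix identity of §7.1–7.2 of the
paper, in which every entry is an honest polynomial in `ℤ[t]`.  Indices `i, j` run over
`Fin r`, thought of as `1,…,r` (the `1`-based index `i` is `i.val + 1`). -/
theorem stmt_8 (r : ℕ) (hr : 1 ≤ r)
    (P' P'' Ω : Matrix (Fin r) (Fin r) (Polynomial ℤ))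
    (Λ' : Fin r → Polynomial ℤ)
    (hP' : ∀ i j, P' i j = if j ≤ i then X ^ (r - 1 - i.val) else 0)
    (hΛ' : ∀ k : Fin r, Λ' k = if k.val = 0 then 1 else X ^ r - 1)
    (hP'' : ∀ i j, P'' i j =
      if i.val = 0 then (if j.val = 0 then X ^ (r - 1) else 0)
      else if j.val = 0 then X ^ (i.val - 1)
      else if i = j then X ^ (i.val - 1)
      else 0)
    (hΩ : ∀ i j, Ω i j =
      X ^ ((r - 1) + (((j.val : ℤ) - (i.val : ℤ) - 1) % (r : ℤ)).toNat)) :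
    P' * Matrix.diagonal Λ' * P''.transpose = Ω := by
  apply Matrix.ext
  intro i j
  have hir : i.val < r := i.isLt
  have hjr : j.val < r := j.isLt
  set z : Fin r := ⟨0, hr⟩ with hz
  have hz0 : z.val = 0 := rfl
  have hzle : ∀ k : Fin r, z ≤ k := fun k => Fin.mk_le_of_le_val (Nat.zero_le _)
  have hmod : (((j.val : ℤ) - (i.val : ℤ) - 1) % (r : ℤ)).toNat =
      if i.val < j.val then j.val - i.val - 1 else r - (i.val + 1) + j.val := by
    rcases lt_or_ge i.val j.val with h | h
    · rw [Int.emod_eq_of_lt (by omega) (by omega)]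
      simp only [if_pos h]; omega
    · have e : ((j.val : ℤ) - (i.val : ℤ) - 1)
          = ((r : ℤ) - (i.val + 1) + j.val) - r := by ring
      rw [e, emod_helper (by omega) (by omega)]
      simp only [if_neg (by omega : ¬ i.val < j.val)]; omega
  have lhs : (P' * Matrix.diagonal Λ' * P''.transpose) i j
      = ∑ k : Fin r, P' i k * Λ' k * P'' j k := by
    rw [Matrix.mul_apply]
    exact Finset.sum_congr rfl fun k _ => by rw [Matrix.mul_diagonal, Matrix.transpose_apply]
  rw [lhs, ← Finset.add_sum_erase _ _ (Finset.mem_univ z), hΩ, hmod]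
  by_cases hj0 : j = z
  · -- j is the first column
    have hjv : j.val = 0 := by rw [hj0]
    have hi0 : ¬ i.val < j.val := by omega
    have hrest : ∑ k ∈ Finset.univ.erase z, P' i k * Λ' k * P'' j k = 0 := by
      apply Finset.sum_eq_zero
      intro k hk
      have hk0 : k.val ≠ 0 := fun h => (Finset.mem_erase.mp hk).1 (Fin.ext h)
      rw [hP'']
      simp [hjv, hk0]
    rw [hrest, add_zero, hP', hΛ', hP'', if_pos (hzle i), if_pos hz0, if_pos hjv, if_pos hz0,
      mul_one, ← pow_add, if_neg hi0]
    congr 1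
    omega
  · have hjne : j.val ≠ 0 := fun h => hj0 (Fin.ext h)
    have hrest : ∑ k ∈ Finset.univ.erase z, P' i k * Λ' k * P'' j k
        = (if j ≤ i then X ^ (r - 1 - i.val) else 0) * (X ^ r - 1) * X ^ (j.val - 1) := by
      rw [Finset.sum_eq_single_of_mem j (Finset.mem_erase.mpr ⟨hj0, Finset.mem_univ j⟩)]
      · rw [hP', hΛ', hP'']
        simp only [if_neg hjne, if_pos rfl, if_true]
      · intro k hk hkj
        have hk0 : k.val ≠ 0 := fun h => (Finset.mem_erase.mp hk).1 (Fin.ext h)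
        rw [hP'']
        simp [hjne, hk0, (Ne.symm hkj)]
    rw [hrest, hP', hΛ', hP'', if_pos (hzle i), if_pos hz0, if_neg hjne, if_pos hz0, mul_one]
    by_cases hji : j ≤ i
    · have hji' : j.val ≤ i.val := hji
      have hij : ¬ i.val < j.val := by omega
      rw [if_pos hji, if_neg hij]
      have expand : X ^ (r - 1 - i.val) * X ^ (j.val - 1)
            + X ^ (r - 1 - i.val) * ((X : Polynomial ℤ) ^ r - 1) * X ^ (j.val - 1)
          = X ^ ((r - 1 - i.val) + (j.val - 1) + r) := by
        rw [pow_add, pow_add]; ring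
      rw [expand]
      congr 1
      omega
    · have hij : i.val < j.val := by
        have : ¬ (j.val ≤ i.val) := fun h => hji (Fin.mk_le_of_le_val h)
        omega
      rw [if_neg hji, if_pos hij, zero_mul, zero_mul, add_zero, ← pow_add]
      congr 1
      omega
end
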